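/- Let K, d be positive natural numbers, μ ∈ (ℝ^d)^K, w ∈ ℝ_{>0}^K, k₀ ∉ p(μ), and write P = p(μ). Then inf_{λ₀ ∈ ℝ^d} g_{k₀}(λ₀) = min over maps φ : P → [d] with S(φ) ≠ ∅ of inf_{λ₀ ∈ ℝ^d} g_{k₀,φ}(λ₀). That is, the global infimum is unchanged by restricting to maps whose cell is nonempty. -/

import Mathlib

/-- Componentwise domination on `ℝ^d` (Euclidean space). -/
def Dominates {d : ℕ} (x y : EuclideanSpace ℝ (Fin d)) : Prop := ∀ j, x j ≤ y j

/-- The Pareto set of `μ`. -/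
def paretoSet {K d : ℕ} (μ : Fin K → EuclideanSpace ℝ (Fin d)) : Set (Fin K) :=
  {k | ∀ k', Dominates (μ k) (μ k') → Dominates (μ k') (μ k)}

/-- `g_{k₀}(λ₀)`. -/
noncomputable def gcost {K d : ℕ} (w : Fin K → ℝ) (μ : Fin K → EuclideanSpace ℝ (Fin d))
    (k₀ : Fin K) (lam0 : EuclideanSpace ℝ (Fin d)) : ℝ :=
  w k₀ / 2 * ‖μ k₀ - lam0‖ ^ 2 +
    ∑ k, (paretoSet μ).indicator
      (fun k => w k / 2 * ⨅ j, (max 0 (μ k j - lam0 j)) ^ 2) k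

/-- `g_{k₀,φ}(λ₀)`, where the minimizing coordinate of each Pareto point is
fixed by `φ` (only the values of `φ` on `p(μ)` matter). -/
noncomputable def gcostMap {K d : ℕ} (w : Fin K → ℝ) (μ : Fin K → EuclideanSpace ℝ (Fin d))
    (k₀ : Fin K) (φ : Fin K → Fin d) (lam0 : EuclideanSpace ℝ (Fin d)) : ℝ :=
  w k₀ / 2 * ‖μ k₀ - lam0‖ ^ 2 +
    ∑ k, (paretoSet μ).indicator
      (fun k => w k / 2 * (max 0 (μ k (φ k) - lam0 (φ k))) ^ 2) k

/-- The cell `S(φ)` of a map `φ` (only its values on `p(μ)` matter). -/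
def cell {K d : ℕ} (μ : Fin K → EuclideanSpace ℝ (Fin d)) (φ : Fin K → Fin d) :
    Set (EuclideanSpace ℝ (Fin d)) :=
  {lam0 | ∀ k ∈ paretoSet μ, ∀ j, μ k (φ k) - lam0 (φ k) ≤ μ k j - lam0 j}

section helpers
variable {K d : ℕ} (μ : Fin K → EuclideanSpace ℝ (Fin d))
  (w : Fin K → ℝ) (k₀ : Fin K)

lemma exists_cell (hd : 0 < d) (lam0 : EuclideanSpace ℝ (Fin d)) :
    ∃ φ : Fin K → Fin d, lam0 ∈ cell μ φ := by
  have : ∀ k : Fin K, ∃ j : Fin d, ∀ j', μ k j - lam0 j ≤ μ k j' - lam0 j' := by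
    intro k
    haveI : Nonempty (Fin d) := ⟨⟨0, hd⟩⟩
    obtain ⟨j, -, hj⟩ := Finset.exists_min_image Finset.univ
      (fun j => μ k j - lam0 j) ⟨Classical.arbitrary _, Finset.mem_univ _⟩
    exact ⟨j, fun j' => hj j' (Finset.mem_univ _)⟩
  choose φ hφ using this
  exact ⟨φ, fun k _ j => hφ k j⟩

lemma gcost_le_gcostMap (hd : 0 < d) (hw : ∀ k, 0 < w k) (φ : Fin K → Fin d) (lam0 : EuclideanSpace ℝ (Fin d)) :
    gcost w μ k₀ lam0 ≤ gcostMap w μ k₀ φ lam0 := by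
  unfold gcost gcostMap
  apply add_le_add_right
  apply Finset.sum_le_sum
  intro k _
  apply Set.indicator_le_indicator
  haveI : Nonempty (Fin d) := ⟨⟨0, hd⟩⟩
  have hb : BddBelow (Set.range fun j => (max 0 (μ k j - lam0 j)) ^ 2) :=
    ⟨0, by rintro x ⟨j, rfl⟩; positivity⟩
  have := ciInf_le hb (φ k)
  nlinarith [(hw k).le, this]

lemma gcost_eq_of_mem_cell (hd : 0 < d) (φ : Fin K → Fin d) (lam0 : EuclideanSpace ℝ (Fin d))
    (h : lam0 ∈ cell μ φ) : gcost w μ k₀ lam0 = gcostMap w μ k₀ φ lam0 := by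
  haveI : Nonempty (Fin d) := ⟨⟨0, hd⟩⟩
  unfold gcost gcostMap
  congr 1
  apply Finset.sum_congr rfl
  intro k _
  by_cases hk : k ∈ paretoSet μ
  · rw [Set.indicator_of_mem hk, Set.indicator_of_mem hk]
    congr 1
    apply le_antisymm
    · exact ciInf_le ⟨0, by rintro x ⟨j, rfl⟩; positivity⟩ (φ k)
    · apply le_ciInf
      intro j
      have h1 := h k hk j
      have : max 0 (μ k (φ k) - lam0 (φ k)) ≤ max 0 (μ k j - lam0 j) :=
        max_le_max le_rfl h1
      nlinarith [le_max_left 0 (μ k (φ k) - lam0 (φ k)), this]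
  · rw [Set.indicator_of_notMem hk, Set.indicator_of_notMem hk]

lemma gcost_nonneg (hw : ∀ k, 0 < w k) (lam0 : EuclideanSpace ℝ (Fin d)) : 0 ≤ gcost w μ k₀ lam0 := by
  unfold gcost
  have hw0 := (hw k₀).le
  have h1 : (0:ℝ) ≤ w k₀ / 2 * ‖μ k₀ - lam0‖ ^ 2 := by positivity
  have h2 : ∀ k : Fin K, (0:ℝ) ≤ (paretoSet μ).indicator
      (fun k => w k / 2 * ⨅ j, (max 0 (μ k j - lam0 j)) ^ 2) k := by
    intro k
    apply Set.indicator_nonneg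
    intro k' _
    have : (0:ℝ) ≤ ⨅ j, (max 0 (μ k' j - lam0 j)) ^ 2 :=
      Real.iInf_nonneg fun j => by positivity
    have := (hw k').le
    positivity
  exact add_nonneg h1 (Finset.sum_nonneg fun k _ => h2 k)

lemma gcostMap_nonneg (hw : ∀ k, 0 < w k) (φ : Fin K → Fin d) (lam0 : EuclideanSpace ℝ (Fin d)) :
    0 ≤ gcostMap w μ k₀ φ lam0 := by
  unfold gcostMap
  have hw0 := (hw k₀).le
  have h1 : (0:ℝ) ≤ w k₀ / 2 * ‖μ k₀ - lam0‖ ^ 2 := by positivity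
  refine add_nonneg h1 (Finset.sum_nonneg fun k _ => ?_)
  apply Set.indicator_nonneg
  intro k' _
  have := (hw k').le
  positivity

end helpers

/-- The global infimum of `g_{k₀}` equals the minimum, over the maps `φ` with
nonempty cell, of the infimum of `g_{k₀,φ}`. -/
theorem inf_g_eq_min_over_valid_maps {K d : ℕ} (hK : 0 < K) (hd : 0 < d)
    (μ : Fin K → EuclideanSpace ℝ (Fin d)) (w : Fin K → ℝ) (hw : ∀ k, 0 < w k)
    (k₀ : Fin K) (hk₀ : k₀ ∉ paretoSet μ) :
    sInf (Set.range (gcost w μ k₀)) =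
      sInf {c : ℝ | ∃ φ : Fin K → Fin d, cell μ φ ≠ ∅ ∧
        c = sInf (Set.range (gcostMap w μ k₀ φ))} := by
  set S := {c : ℝ | ∃ φ : Fin K → Fin d, cell μ φ ≠ ∅ ∧
        c = sInf (Set.range (gcostMap w μ k₀ φ))} with hS
  have hbddg : BddBelow (Set.range (gcost w μ k₀)) :=
    ⟨0, by rintro x ⟨l, rfl⟩; exact gcost_nonneg μ w k₀ hw l⟩
  have hbddφ : ∀ φ : Fin K → Fin d, BddBelow (Set.range (gcostMap w μ k₀ φ)) :=
    fun φ => ⟨0, by rintro x ⟨l, rfl⟩; exact gcostMap_nonneg μ w k₀ hw φ l⟩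
  have hSbdd : BddBelow S := by
    refine ⟨0, ?_⟩
    rintro c ⟨φ, -, rfl⟩
    exact le_csInf (Set.range_nonempty _)
      (by rintro b ⟨l, rfl⟩; exact gcostMap_nonneg μ w k₀ hw φ l)
  have hSne : S.Nonempty := by
    obtain ⟨φ, hφ⟩ := exists_cell μ hd (0 : EuclideanSpace ℝ (Fin d))
    exact ⟨_, φ, Set.nonempty_iff_ne_empty.mp ⟨0, hφ⟩, rfl⟩
  apply le_antisymm
  · apply le_csInf hSne
    rintro c ⟨φ, -, rfl⟩
    apply le_csInf (Set.range_nonempty _)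
    rintro b ⟨l, rfl⟩
    exact (csInf_le hbddg ⟨l, rfl⟩).trans (gcost_le_gcostMap μ w k₀ hd hw φ l)
  · apply le_csInf (Set.range_nonempty _)
    rintro b ⟨l, rfl⟩
    obtain ⟨φ, hφ⟩ := exists_cell μ hd l
    have h1 : sInf (Set.range (gcostMap w μ k₀ φ)) ∈ S :=
      ⟨φ, Set.nonempty_iff_ne_empty.mp ⟨l, hφ⟩, rfl⟩
    calc sInf S ≤ sInf (Set.range (gcostMap w μ k₀ φ)) := csInf_le hSbdd h1
    _ ≤ gcostMap w μ k₀ φ l := csInf_le (hbddφ φ) ⟨l, rfl⟩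
    _ = gcost w μ k₀ l := (gcost_eq_of_mem_cell μ w k₀ hd φ l hφ).symm
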